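/- Let γ_X and γ_Y be two DMSs, and suppose R is an ε-tripod between γ_X and γ_Y. Then for any closed interval I = [u, u'] ⊆ ℝ, writing I^ε = [u−ε, u'+ε], one has ⋁_{I^ε} d_X ≤_R (⋁_I d_Y) + 2ε and ⋁_{I^ε} d_Y ≤_R (⋁_I d_X) + 2ε. -/

import Mathlib

/-
The minimum of `d_Y` over `I` is attained at some `t₀ ∈ I`, and `[t₀ - ε, t₀ + ε] ⊆ I^ε`, so
`⋁_{I^ε} d_X ≤ ⋁_{[t₀-ε, t₀+ε]} d_X ≤ d_Y(t₀) + 2ε = ⋁_I d_Y + 2ε`. Continuity is what makes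
the infima over compact intervals minima.
-/

namespace Stmt3

/-- `(⋁_{[a,b]} d)(x,x')`. -/
noncomputable def vee {X : Type} (d : ℝ → X → X → ℝ) (a b : ℝ) (x x' : X) : ℝ :=
  sInf ((fun s => d s x x') '' Set.Icc a b)

section Vee

variable {X : Type} {d : ℝ → X → X → ℝ} {x x' : X}

theorem exists_mem_Icc_eq_vee (hd : Continuous fun t => d t x x') {a b : ℝ} (hab : a ≤ b) :
    ∃ t ∈ Set.Icc a b, d t x x' = vee d a b x x' :=
  (isCompact_Icc.image hd).sInf_mem ((Set.nonempty_Icc.2 hab).image _)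

theorem vee_le_vee_of_Icc_subset (hd : Continuous fun t => d t x x') {a b a' b' : ℝ}
    (hab' : a' ≤ b') (h : Set.Icc a' b' ⊆ Set.Icc a b) :
    vee d a b x x' ≤ vee d a' b' x x' :=
  csInf_le_csInf (isCompact_Icc.image hd).bddBelow ((Set.nonempty_Icc.2 hab').image _)
    (Set.image_mono h)

end Vee

theorem vee_thickening_le {X Y : Type} {dX : ℝ → X → X → ℝ} {dY : ℝ → Y → Y → ℝ}
    {x x' : X} {y y' : Y} (hdX : Continuous fun t => dX t x x')
    (hdY : Continuous fun t => dY t y y') {ε u u' : ℝ} (hε : 0 ≤ ε) (huu' : u ≤ u')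
    (h : ∀ t ∈ Set.Icc u u', vee dX (t - ε) (t + ε) x x' ≤ dY t y y' + 2 * ε) :
    vee dX (u - ε) (u' + ε) x x' ≤ vee dY u u' y y' + 2 * ε := by
  obtain ⟨t₀, ⟨hut₀, ht₀u'⟩, hmin⟩ := exists_mem_Icc_eq_vee hdY huu'
  calc vee dX (u - ε) (u' + ε) x x'
      ≤ vee dX (t₀ - ε) (t₀ + ε) x x' :=
        vee_le_vee_of_Icc_subset hdX (by linarith)
          (Set.Icc_subset_Icc (by linarith) (by linarith))
    _ ≤ dY t₀ y y' + 2 * ε := h t₀ ⟨hut₀, ht₀u'⟩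
    _ = vee dY u u' y y' + 2 * ε := by rw [hmin]

theorem eps_tripod_interval_inequality
    {X Y Z : Type}
    (dX : ℝ → X → X → ℝ) (dY : ℝ → Y → Y → ℝ)
    (hXcont : ∀ x x', Continuous fun t => dX t x x')
    (hYcont : ∀ y y', Continuous fun t => dY t y y')
    (pX : Z → X) (pY : Z → Y)
    (ε : ℝ) (hε : 0 ≤ ε)
    (htripod : ∀ t : ℝ, ∀ z z' : Z,
      vee dX (t - ε) (t + ε) (pX z) (pX z') ≤ dY t (pY z) (pY z') + 2 * ε ∧
      vee dY (t - ε) (t + ε) (pY z) (pY z') ≤ dX t (pX z) (pX z') + 2 * ε) :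
    ∀ u u' : ℝ, u ≤ u' → ∀ z z' : Z,
      vee dX (u - ε) (u' + ε) (pX z) (pX z') ≤ vee dY u u' (pY z) (pY z') + 2 * ε ∧
      vee dY (u - ε) (u' + ε) (pY z) (pY z') ≤ vee dX u u' (pX z) (pX z') + 2 * ε :=
  fun _ _ huu' z z' =>
    ⟨vee_thickening_le (hXcont _ _) (hYcont _ _) hε huu' fun t _ => (htripod t z z').1,
      vee_thickening_le (hYcont _ _) (hXcont _ _) hε huu' fun t _ => (htripod t z z').2⟩

end Stmt3
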